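/- Let K be a field of characteristic 0, n ≥ 1, and X ∈ Matₙ(K) with tr X = 0. Then the bilinear map η_X : Matₙ(K) × Matₙ(K) → Matₙ(K), η_X(a,b) = (tr b)·(X·a − a·X), is a right-symmetric 2-cocycle of glₙ with coefficients in the regular module: d_rsym η_X = 0, i.e. a·η_X(b,c) − a·η_X(c,b) − η_X(a·b, c) + η_X(a·c, b) + η_X(a, [b,c]) − η_X(a,b)·c + η_X(a,c)·b = 0 for all a,b,c ∈ Matₙ(K). -/

import Mathlib

/-!
The commutator map `[X, -]` is a derivation of the associative product, so in
`d_rsym η_X(a,b,c)` the terms carrying `tr c` cancel by the Leibniz rule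
`[X, ab] = a[X, b] + [X, a]b`, and likewise those carrying `tr b`. The remaining term
`η_X(a, [b,c])` vanishes because the trace kills commutators.
-/

/-- The 2-cochain `η_X(a,b) = (tr b)·[X,a]` on `glₙ`. -/
def glEta {K : Type*} [Field K] (n : ℕ) (X : Matrix (Fin n) (Fin n) K)
    (a b : Matrix (Fin n) (Fin n) K) : Matrix (Fin n) (Fin n) K :=
  b.trace • (X * a - a * X)

section

variable {R A : Type*} [CommRing R] [Ring A] [Algebra R A]

def rsymCoboundary (ψ : A → A → A) (a b c : A) : A :=
  a * ψ b c - a * ψ c b - ψ (a * b) c + ψ (a * c) b + ψ a (b * c - c * b)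
    - ψ a b * c + ψ a c * b

theorem commutator_mul_leibniz (X a b : A) :
    X * (a * b) - a * b * X = a * (X * b - b * X) + (X * a - a * X) * b := by
  noncomm_ring

theorem rsymCoboundary_smul_commutator_eq_zero (τ : A →ₗ[R] R)
    (hτ : ∀ b c, τ (b * c) = τ (c * b)) (X a b c : A) :
    rsymCoboundary (fun a b => τ b • (X * a - a * X)) a b c = 0 := by
  have hτ_commutator : τ (b * c - c * b) = 0 := by rw [map_sub, hτ, sub_self]
  rw [rsymCoboundary, hτ_commutator, zero_smul, add_zero,
    commutator_mul_leibniz X a b, commutator_mul_leibniz X a c]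
  simp only [mul_smul_comm, smul_mul_assoc]
  module

end

theorem glEta_cocycle
    {K : Type*} [Field K] (n : ℕ)
    (X : Matrix (Fin n) (Fin n) K) :
    ∀ a b c : Matrix (Fin n) (Fin n) K,
      a * glEta n X b c - a * glEta n X c b - glEta n X (a * b) c
        + glEta n X (a * c) b + glEta n X a (b * c - c * b)
        - glEta n X a b * c + glEta n X a c * b = 0 :=
  rsymCoboundary_smul_commutator_eq_zero (Matrix.traceLinearMap (Fin n) K K)
    Matrix.trace_mul_comm X
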